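/- arXiv:2508.15198 — 3 statements merged into one kernel-verified Lean document; each statement's English description precedes it below -/
import Mathlib

section
/- Let C0 and C1 be bounded positive real constants, let C2 be a nonzero real number, and let C3 be a real number. Then the limit, as δ → 0⁺, of μ({ w ∈ [−δ, δ] : |exp(C1/|w|) · cos(C2/w + C3)| ≥ C0 }) / (2δ) equals 1, where μ denotes the Lebesgue measure on ℝ. -/
/-!
Off the origin, a point `w ∈ [-δ, δ]` can violate the inequality only if
`|cos (C2 / w + C3)| < ε := C0 e^{-C1/δ}`. By Jordan's inequality `C2 / w` then lies within
`r = πε/2` of a zero `a_k = kπ + π/2 - C3` of `t ↦ cos (t + C3)`, and `|C2 / w| ≥ |C2| / δ`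
forces `|a_k| ≥ 2r` once δ is small. The preimage of `(a_k - r, a_k + r)` under `w ↦ C2 / w`
lies in an interval of length `4 |C2| r / a_k²`, and `∑ 1 / a_k²` converges, so the exceptional
set has measure `O(e^{-C1/δ}) = o(δ)`.
-/

open MeasureTheory Filter Real Topology

theorem Real.exists_abs_sub_le_pi_div_two_mul_abs_cos (t : ℝ) :
    ∃ k : ℤ, |t - (k * π + π / 2)| ≤ π / 2 * |cos t| := by
  set k := round ((t - π / 2) / π)
  refine ⟨k, ?_⟩
  set s := t - (k * π + π / 2)
  have hs : |s| ≤ π / 2 := by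
    have hround := abs_sub_round ((t - π / 2) / π)
    have : s = π * ((t - π / 2) / π - k) := by field_simp; ring
    rw [this, abs_mul, abs_of_pos pi_pos]
    nlinarith [pi_pos]
  have hcos : |cos t| = |sin s| := by
    rw [show t = (s + π / 2) + k * π by ring, cos_add_int_mul_pi, abs_mul, abs_neg_one_zpow,
      one_mul, cos_add_pi_div_two, abs_neg]
  have hjordan := mul_abs_le_abs_sin hs
  rw [hcos]
  calc |s| = π / 2 * (2 / π * |s|) := by field_simp
    _ ≤ π / 2 * |sin s| := by gcongr

theorem setOf_abs_div_sub_lt_subset_ball {c a r : ℝ} (h : 2 * r ≤ |a|) :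
    {w : ℝ | |c / w - a| < r} ⊆ Metric.ball (c / a) (2 * |c| * r / a ^ 2) := by
  intro w (hw : |c / w - a| < r)
  have hfar : |a| / 2 < |c / w| := by
    linarith [abs_sub_abs_le_abs_sub a (c / w), abs_sub_comm (c / w) a]
  have ha : 0 < |a| := by linarith [abs_nonneg (c / w - a)]
  have hcw : c / w ≠ 0 := abs_pos.mp (by linarith)
  obtain ⟨hc, hw0⟩ := div_ne_zero_iff.mp hcw
  rw [Metric.mem_ball, Real.dist_eq]
  have hr : 0 < r := by linarith [abs_nonneg (c / w - a)]
  have ha0 : a ≠ 0 := abs_pos.mp ha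
  calc |w - c / a| = |c| * |c / w - a| / (|c / w| * |a|) := by
        rw [abs_sub_comm, ← abs_mul, ← abs_mul, ← abs_div]
        congr 1
        field_simp
    _ < |c| * r / (|a| / 2 * |a|) := by
        gcongr
    _ = 2 * |c| * r / a ^ 2 := by
        rw [← sq_abs a]
        field_simp

theorem volume_setOf_abs_div_sub_lt_le {c a r : ℝ} (h : 2 * r ≤ |a|) :
    volume {w : ℝ | |c / w - a| < r} ≤ ENNReal.ofReal (4 * |c| * r / a ^ 2) := by
  refine (measure_mono (setOf_abs_div_sub_lt_subset_ball h)).trans_eq ?_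
  rw [Real.volume_ball]
  ring_nf

theorem summable_inv_sq_int_mul_add {p : ℝ} (hp : p ≠ 0) (q : ℝ) :
    Summable fun k : ℤ => ((k * p + q) ^ 2)⁻¹ := by
  refine (((Real.summable_one_div_int_add_rpow (q / p) 2).mpr one_lt_two).mul_left
    (p ^ 2)⁻¹).congr fun k => ?_
  rw [Real.rpow_two, sq_abs]
  field_simp

theorem volume_setOf_abs_cos_div_add_lt_le {c d ε δ : ℝ} (hε : 0 ≤ ε)
    (hδ : 3 * π * ε * δ ≤ 2 * |c|) :
    volume {w : ℝ | w ≠ 0 ∧ |w| ≤ δ ∧ |cos (c / w + d)| < ε} ≤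
      ENNReal.ofReal (2 * π * |c| * ε * ∑' k : ℤ, ((k * π + (π / 2 - d)) ^ 2)⁻¹) := by
  set r := π / 2 * ε with hr
  set a : ℤ → ℝ := fun k => k * π + (π / 2 - d)
  have cover : {w : ℝ | w ≠ 0 ∧ |w| ≤ δ ∧ |cos (c / w + d)| < ε} ⊆
      ⋃ k, ⋃ (_ : 2 * r ≤ |a k|), {w | |c / w - a k| < r} := by
    rintro w ⟨hw0, hwδ, hcos⟩
    obtain ⟨k, hk⟩ := exists_abs_sub_le_pi_div_two_mul_abs_cos (c / w + d)
    have hnear : |c / w - a k| < r :=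
      calc |c / w - a k| = |c / w + d - (k * π + π / 2)| := by congr 1; simp only [a]; ring
        _ ≤ π / 2 * |cos (c / w + d)| := hk
        _ < r := mul_lt_mul_of_pos_left hcos (by positivity)
    have hfar : 3 * r ≤ |c / w| := by
      rw [abs_div, le_div_iff₀ (abs_pos.mpr hw0)]
      calc 3 * r * |w| ≤ 3 * r * δ := by gcongr
        _ = 3 * π * ε * δ / 2 := by rw [hr]; ring
        _ ≤ |c| := by linarith
    simp only [Set.mem_iUnion]
    exact ⟨k, by linarith [abs_sub_abs_le_abs_sub (c / w) (a k)], hnear⟩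
  have hsum :=
    (summable_inv_sq_int_mul_add pi_ne_zero (π / 2 - d)).mul_left (2 * π * |c| * ε)
  calc _ ≤ volume (⋃ k, ⋃ (_ : 2 * r ≤ |a k|), {w | |c / w - a k| < r}) :=
        measure_mono cover
    _ ≤ ∑' k, volume (⋃ (_ : 2 * r ≤ |a k|), {w | |c / w - a k| < r}) := measure_iUnion_le _
    _ ≤ ∑' k, ENNReal.ofReal (2 * π * |c| * ε * (a k ^ 2)⁻¹) := by
        refine ENNReal.tsum_le_tsum fun k => ?_
        rw [Set.iUnion_eq_if]
        split_ifs with hk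
        · refine (volume_setOf_abs_div_sub_lt_le hk).trans_eq ?_
          congr 1
          ring
        · simp
    _ = _ := by
        rw [← ENNReal.ofReal_tsum_of_nonneg (fun k => by positivity) hsum, tsum_mul_left]

theorem tendsto_volume_real_div_of_diff_le {S : ℝ → Set ℝ} {B : ℝ → ℝ}
    (hS : ∀ δ, S δ ⊆ Set.Icc (-δ) δ)
    (hB : ∀ᶠ δ in 𝓝[>] 0, volume.real (Set.Icc (-δ) δ \ S δ) ≤ B δ)
    (hlim : Tendsto (fun δ => B δ / (2 * δ)) (𝓝[>] 0) (𝓝 0)) :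
    Tendsto (fun δ => volume.real (S δ) / (2 * δ)) (𝓝[>] 0) (𝓝 1) := by
  refine tendsto_of_tendsto_of_tendsto_of_le_of_le' (by simpa using hlim.const_sub 1)
    tendsto_const_nhds ?_ ?_
  · filter_upwards [hB, self_mem_nhdsWithin] with δ hBδ (hδ : 0 < δ)
    have hIcc : 2 * δ ≤ volume.real (S δ) + volume.real (Set.Icc (-δ) δ \ S δ) := by
      calc 2 * δ = volume.real (Set.Icc (-δ) δ) := by
            rw [Real.volume_real_Icc, max_eq_left (by linarith)]; ring
        _ = volume.real (S δ ∪ (Set.Icc (-δ) δ \ S δ)) := by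
            rw [Set.union_sdiff_cancel (hS δ)]
        _ ≤ _ := measureReal_union_le _ _
    rw [sub_le_iff_le_add, ← add_div, le_div_iff₀ (by linarith), one_mul]
    linarith
  · filter_upwards [self_mem_nhdsWithin] with δ (hδ : 0 < δ)
    rw [div_le_one (by linarith)]
    calc volume.real (S δ) ≤ volume.real (Set.Icc (-δ) δ) :=
          measureReal_mono (hS δ) measure_Icc_lt_top.ne
      _ = 2 * δ := by rw [Real.volume_real_Icc, max_eq_left (by linarith)]; ring

theorem tendsto_exp_neg_div_div_nhdsGT_zero {C : ℝ} (hC : 0 < C) :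
    Tendsto (fun δ => exp (-C / δ) / δ) (𝓝[>] 0) (𝓝 0) := by
  have hinv : Tendsto (fun δ : ℝ => C / δ) (𝓝[>] 0) atTop := by
    simpa only [div_eq_mul_inv] using tendsto_inv_nhdsGT_zero.const_mul_atTop hC
  refine Tendsto.congr' ?_
    (by simpa using ((tendsto_pow_mul_exp_neg_atTop_nhds_zero 1).comp hinv).div_const C)
  filter_upwards [self_mem_nhdsWithin] with δ (hδ : 0 < δ)
  rw [neg_div]
  field_simp

theorem Icc_diff_setOf_le_abs_exp_mul_cos_subset {C0 C1 C2 C3 δ : ℝ} (hC1 : 0 ≤ C1) :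
    Set.Icc (-δ) δ \
        {w | w ∈ Set.Icc (-δ) δ ∧ C0 ≤ |exp (C1 / |w|) * cos (C2 / w + C3)|} ⊆
      insert 0 {w | w ≠ 0 ∧ |w| ≤ δ ∧ |cos (C2 / w + C3)| < C0 * exp (-C1 / δ)} := by
  rintro w ⟨hw, hgood⟩
  rcases eq_or_ne w 0 with rfl | hw0
  · exact Set.mem_insert _ _
  have hlt : exp (C1 / |w|) * |cos (C2 / w + C3)| < C0 := by
    simpa [abs_mul] using not_le.mp fun h => hgood ⟨hw, h⟩
  have hwδ : |w| ≤ δ := abs_le.mpr hw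
  refine Or.inr ⟨hw0, hwδ, ?_⟩
  calc |cos (C2 / w + C3)| < C0 / exp (C1 / |w|) := by
        rw [lt_div_iff₀ (exp_pos _), mul_comm]; exact hlt
    _ ≤ C0 / exp (C1 / δ) := by
        have hC0 : 0 ≤ C0 := le_trans (by positivity) hlt.le
        gcongr
    _ = C0 * exp (-C1 / δ) := by rw [neg_div, exp_neg, div_eq_mul_inv]

theorem stmt_0 (C0 C1 C2 C3 : ℝ) (hC0 : 0 < C0) (hC1 : 0 < C1) (hC2 : C2 ≠ 0) :
    Tendsto
      (fun δ : ℝ =>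
        (volume {w : ℝ | w ∈ Set.Icc (-δ) δ ∧
          C0 ≤ |Real.exp (C1 / |w|) * Real.cos (C2 / w + C3)|}).toReal / (2 * δ))
      (nhdsWithin 0 (Set.Ioi 0)) (nhds 1) := by
  set K := ∑' k : ℤ, ((k * π + (π / 2 - C3)) ^ 2)⁻¹
  have hK : 0 ≤ K := tsum_nonneg fun k => by positivity
  have hratio := tendsto_exp_neg_div_div_nhdsGT_zero hC1
  have hsmall : ∀ᶠ δ in 𝓝[>] 0, 3 * π * (C0 * exp (-C1 / δ)) * δ ≤ 2 * |C2| := by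
    have hid : Tendsto (fun δ : ℝ => δ) (𝓝[>] 0) (𝓝 0) :=
      tendsto_nhdsWithin_of_tendsto_nhds tendsto_id
    refine Tendsto.eventually_le_const (by positivity) (Tendsto.congr' ?_
      (by simpa using (hratio.mul (hid.mul hid)).const_mul (3 * π * C0)))
    filter_upwards [self_mem_nhdsWithin] with δ (hδ : 0 < δ)
    field_simp
  refine tendsto_volume_real_div_of_diff_le
    (B := fun δ => 2 * π * |C2| * (C0 * exp (-C1 / δ)) * K) (fun δ w hw => hw.1) ?_ ?_
  · filter_upwards [hsmall] with δ hδ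
    set T := {w | w ≠ 0 ∧ |w| ≤ δ ∧ |cos (C2 / w + C3)| < C0 * exp (-C1 / δ)}
    refine ENNReal.toReal_le_of_le_ofReal (by positivity) ?_
    calc _ ≤ volume (insert 0 T) := measure_mono (Icc_diff_setOf_le_abs_exp_mul_cos_subset hC1.le)
      _ = volume T := measure_congr (insert_ae_eq_self _ _)
      _ ≤ _ := volume_setOf_abs_cos_div_add_lt_le (by positivity) hδ
  · refine Tendsto.congr' ?_ (by simpa using hratio.const_mul (π * |C2| * C0 * K))
    filter_upwards [self_mem_nhdsWithin] with δ (hδ : 0 < δ)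
    field_simp
end

section
/- Let C0, γ1, γ2 be positive real constants, let a1, a2 be nonzero real numbers, and let c be a real number. Then the limit, as δ → 0⁺, of μ({ (w1, w2) ∈ (0, δ]² : exp(γ1/w1 + γ2/w2) · |cos(a1/w1 + a2/w2 + c)| ≥ C0 }) / δ² equals 1, where μ denotes the two-dimensional Lebesgue measure. -/
/-!
Write `ε(δ) = C0 · exp (-(γ1 + γ2) / δ)`. On `(0, δ]²` the exponential factor is at least
`exp ((γ1 + γ2) / δ)`, so the inequality can only fail where `|cos (a1/w1 + a2/w2 + c)| ≤ ε(δ)`.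
For fixed `w1`, the phase `a2/w2 + (a1/w1 + c)` runs monotonically through the periods of `cos`
as `w2` goes to `0`; on each period the set where `|cos| ≤ ε` has `w2`-length at most `ε` times the
length of the period, so the exceptional set has measure at most `2 ε(δ) δ` in `w2`, and at most
`2 ε(δ) δ²` in the plane by Fubini. Since `ε(δ) → 0`, the ratio tends to `1`.
-/

open MeasureTheory Filter Real Set Topology

lemma mem_Icc_div_of_abs_div_sub_le {a w c r : ℝ} (ha : 0 < a) (hw : 0 < w)
    (h : |a / w - c| ≤ r) (hrc : r < c) : w ∈ Icc (a / (c + r)) (a / (c - r)) := by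
  obtain ⟨h₁, h₂⟩ := abs_sub_le_iff.1 h
  have hw' : w = a / (a / w) := by field_simp
  constructor <;> rw [hw'] <;> gcongr <;> linarith

lemma exists_int_abs_sub_le_of_abs_cos_le {t ε : ℝ} (h : |cos t| ≤ ε) :
    ∃ k : ℤ, |t - (π / 2 + k * π)| ≤ π / 2 * ε := by
  set k := round ((t - π / 2) / π)
  set s := t - (π / 2 + k * π)
  have hs : |s| ≤ π / 2 := by
    have hs_eq : s = π * ((t - π / 2) / π - k) := by field_simp; ring
    rw [hs_eq, abs_mul, abs_of_pos pi_pos]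
    linarith [mul_le_mul_of_nonneg_left (abs_sub_round ((t - π / 2) / π)) pi_pos.le]
  have hcos : |cos t| = |sin s| := by
    rw [show t = s + π / 2 + k * π by ring, cos_add_int_mul_pi, cos_add_pi_div_two, abs_mul,
      abs_zpow, abs_neg, abs_one, one_zpow, one_mul, abs_neg]
  refine ⟨k, ?_⟩
  have hsin := mul_abs_le_abs_sin hs
  rw [← hcos] at hsin
  have hπ := pi_pos
  calc |s| = π / 2 * (2 / π * |s|) := by field_simp
    _ ≤ π / 2 * ε := by gcongr; linarith

lemma div_sub_div_le_mul_div_sub_div {a r s c : ℝ} (ha : 0 ≤ a) (hr : 0 ≤ r) (hrs : r ≤ s)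
    (hs : 0 < s) (hsc : s < c) :
    a / (c - r) - a / (c + r) ≤ r / s * (a / (c - s) - a / (c + s)) := by
  have hcs : 0 < c - s := by linarith
  have hcr : 0 < c - r := by linarith
  rw [div_sub_div _ _ hcr.ne' (by linarith), div_sub_div _ _ hcs.ne' (by linarith),
    div_mul_div_comm, div_le_div_iff₀ (by nlinarith) (mul_pos hs (mul_pos hcs (by linarith)))]
  nlinarith [mul_nonneg (mul_nonneg ha hr) (mul_nonneg hs.le (sub_nonneg.2 hrs)), sq_nonneg (s - r)]

lemma sum_range_div_sub_div_le {a ε p d : ℝ} (ha : 0 ≤ a) (hε₀ : 0 ≤ ε) (hε₁ : ε ≤ 1)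
    (hp : 0 < p) (hd : 0 < d) (N : ℕ) :
    ∑ n ∈ Finset.range N,
        (a / (d + n * p + p / 2 - p / 2 * ε) - a / (d + n * p + p / 2 + p / 2 * ε)) ≤
      ε * (a / d) := by
  have hstep (n : ℕ) : a / (d + n * p + p / 2 - p / 2 * ε) - a / (d + n * p + p / 2 + p / 2 * ε) ≤
      ε * (a / (d + n * p) - a / (d + (n + 1 : ℕ) * p)) := by
    have hdn : 0 < d + n * p := by positivity
    convert div_sub_div_le_mul_div_sub_div ha (by positivity)
      (mul_le_of_le_one_right (by positivity) hε₁) (by positivity)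
      (by linarith : p / 2 < d + n * p + p / 2) using 2
    · exact (mul_div_cancel_left₀ _ (by positivity)).symm
    · push_cast; ring
  calc _ ≤ ∑ n ∈ Finset.range N, ε * (a / (d + n * p) - a / (d + (n + 1 : ℕ) * p)) :=
        Finset.sum_le_sum fun n _ ↦ hstep n
    _ = ε * (a / d - a / (d + N * p)) := by
        rw [← Finset.mul_sum, Finset.sum_range_sub' (fun n : ℕ ↦ a / (d + n * p))]
        simp
    _ ≤ ε * (a / d) := by
        gcongr
        exact sub_le_self _ (by positivity)

lemma volume_abs_cos_div_add_le_of_pos {a b δ ε : ℝ} (ha : 0 < a) (hδ : 0 < δ)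
    (hδa : 2 * π * δ ≤ a) (hε₀ : 0 ≤ ε) (hε₁ : ε ≤ 1) :
    volume {w | w ∈ Ioc 0 δ ∧ |cos (a / w + b)| ≤ ε} ≤ ENNReal.ofReal (2 * ε * δ) := by
  have hπ := pi_pos
  have haδ : 2 * π ≤ a / δ := (le_div_iff₀ hδ).2 hδa
  -- the zeros of `cos (· + b)` that a phase `a / w + b` with `w ≤ δ` can come near are
  -- the `d + n * π + π / 2` with `n : ℕ`
  set k₀ : ℤ := ⌈(a / δ + b - π) / π⌉
  set d := k₀ * π - b
  have hd : a / δ - π ≤ d := by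
    have := (div_le_iff₀ hπ).1 (Int.le_ceil ((a / δ + b - π) / π)); linarith
  have hd₀ : 0 < d := by linarith
  set r := π / 2 * ε
  have hr₀ : 0 ≤ r := by positivity
  have hr : r ≤ π / 2 := mul_le_of_le_one_right (by positivity) hε₁
  have hcover : {w | w ∈ Ioc 0 δ ∧ |cos (a / w + b)| ≤ ε} ⊆
      ⋃ n : ℕ, Icc (a / (d + n * π + π / 2 + r)) (a / (d + n * π + π / 2 - r)) := by
    rintro w ⟨⟨hw₀, hwδ⟩, hw⟩
    obtain ⟨k, hk : |a / w + b - (π / 2 + k * π)| ≤ r⟩ := exists_int_abs_sub_le_of_abs_cos_le hw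
    have hk₀ : k₀ ≤ k := by
      have : a / δ ≤ a / w := by gcongr
      refine Int.ceil_le.2 ((div_le_iff₀ hπ).2 ?_)
      linarith [(abs_sub_le_iff.1 hk).1]
    obtain ⟨n, hn⟩ := Int.eq_ofNat_of_zero_le (sub_nonneg.2 hk₀)
    have hkn : (k : ℝ) = k₀ + n := by rw [← Int.cast_natCast, ← hn]; push_cast; ring
    refine mem_iUnion.2 ⟨n, mem_Icc_div_of_abs_div_sub_le ha hw₀ ?_ ?_⟩
    · convert hk using 2; rw [hkn]; ring
    · nlinarith [(n.cast_nonneg : (0 : ℝ) ≤ n)]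
  calc volume {w | w ∈ Ioc 0 δ ∧ |cos (a / w + b)| ≤ ε}
      ≤ ∑' n : ℕ, volume (Icc (a / (d + n * π + π / 2 + r)) (a / (d + n * π + π / 2 - r))) :=
        (measure_mono hcover).trans (measure_iUnion_le _)
    _ ≤ ENNReal.ofReal (ε * (a / d)) := by
      refine ENNReal.tsum_le_of_sum_range_le fun N ↦ ?_
      simp only [Real.volume_Icc]
      rw [← ENNReal.ofReal_sum_of_nonneg fun n _ ↦ sub_nonneg.2 (by gcongr <;> nlinarith)]
      exact ENNReal.ofReal_le_ofReal (sum_range_div_sub_div_le ha.le hε₀ hε₁ hπ hd₀ N)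
    _ ≤ ENNReal.ofReal (2 * ε * δ) := by
      have : a / d ≤ 2 * δ := by
        rw [div_le_iff₀ hd₀]
        linarith [(div_le_iff₀' hδ).1 (show a / δ ≤ 2 * d by linarith)]
      exact ENNReal.ofReal_le_ofReal (by nlinarith)

lemma volume_abs_cos_div_add_le {a b δ ε : ℝ} (ha : a ≠ 0) (hδ : 0 < δ)
    (hδa : 2 * π * δ ≤ |a|) (hε₀ : 0 ≤ ε) (hε₁ : ε ≤ 1) :
    volume {w | w ∈ Ioc 0 δ ∧ |cos (a / w + b)| ≤ ε} ≤ ENNReal.ofReal (2 * ε * δ) := by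
  rcases ha.lt_or_gt with ha | ha
  · have hset : {w | w ∈ Ioc 0 δ ∧ |cos (a / w + b)| ≤ ε} =
        {w | w ∈ Ioc 0 δ ∧ |cos (|a| / w + -b)| ≤ ε} := by
      simp only [abs_of_neg ha, neg_div, ← neg_add, cos_neg]
    rw [hset]
    exact volume_abs_cos_div_add_le_of_pos (abs_pos.2 ha.ne) hδ hδa hε₀ hε₁
  · exact volume_abs_cos_div_add_le_of_pos ha hδ (by rwa [abs_of_pos ha] at hδa) hε₀ hε₁

lemma volume_abs_cos_div_add_div_add_le {a₁ a₂ c δ ε : ℝ} (ha₂ : a₂ ≠ 0) (hδ : 0 < δ)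
    (hδa : 2 * π * δ ≤ |a₂|) (hε₀ : 0 ≤ ε) (hε₁ : ε ≤ 1) :
    volume {p : ℝ × ℝ | p ∈ Ioc 0 δ ×ˢ Ioc 0 δ ∧ |cos (a₁ / p.1 + a₂ / p.2 + c)| ≤ ε} ≤
      ENNReal.ofReal (2 * ε * δ ^ 2) := by
  set B := {p : ℝ × ℝ | p ∈ Ioc 0 δ ×ˢ Ioc 0 δ ∧ |cos (a₁ / p.1 + a₂ / p.2 + c)| ≤ ε}
  have hB : MeasurableSet B :=
    (measurableSet_Ioc.prod measurableSet_Ioc).inter (measurableSet_le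
      (f := fun p : ℝ × ℝ ↦ |cos (a₁ / p.1 + a₂ / p.2 + c)|) (by fun_prop) measurable_const)
  have hslice (x : ℝ) :
      volume (Prod.mk x ⁻¹' B) ≤ (Ioc 0 δ).indicator (fun _ ↦ ENNReal.ofReal (2 * ε * δ)) x := by
    by_cases hx : x ∈ Ioc 0 δ
    · have hpre : Prod.mk x ⁻¹' B = {y | y ∈ Ioc 0 δ ∧ |cos (a₂ / y + (a₁ / x + c))| ≤ ε} := by
        ext y
        simp only [B, mem_preimage, mem_ofPred_eq, mem_prod, hx, true_and, add_assoc,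
          add_left_comm (a₁ / x)]
      rw [hpre, indicator_of_mem hx]
      exact volume_abs_cos_div_add_le ha₂ hδ hδa hε₀ hε₁
    · have hpre : Prod.mk x ⁻¹' B = ∅ := eq_empty_of_forall_notMem fun y hy ↦ hx hy.1.1
      simp [hpre, hx]
  rw [Measure.volume_eq_prod, Measure.prod_apply hB]
  calc ∫⁻ x, volume (Prod.mk x ⁻¹' B)
      ≤ ∫⁻ x, (Ioc 0 δ).indicator (fun _ ↦ ENNReal.ofReal (2 * ε * δ)) x := lintegral_mono hslice
    _ = ENNReal.ofReal (2 * ε * δ ^ 2) := by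
      rw [lintegral_indicator_const measurableSet_Ioc, Real.volume_Ioc, sub_zero,
        ← ENNReal.ofReal_mul (by positivity)]
      ring_nf

lemma toReal_measure_div_mem_Icc_of_subset_union {α : Type*} [MeasurableSpace α] {μ : Measure α}
    {S Q B : Set α} {q η : ℝ} (hq : 0 < q) (hη : 0 ≤ η) (hQ : μ Q = ENNReal.ofReal q)
    (hSQ : S ⊆ Q) (hQSB : Q ⊆ S ∪ B) (hB : μ B ≤ ENNReal.ofReal (η * q)) :
    (μ S).toReal / q ∈ Icc (1 - η) 1 := by
  have hSQ' : μ S ≤ ENNReal.ofReal q := hQ ▸ measure_mono hSQ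
  have hSfin : μ S ≠ ⊤ := ne_top_of_le_ne_top ENNReal.ofReal_ne_top hSQ'
  have hBfin : μ B ≠ ⊤ := ne_top_of_le_ne_top ENNReal.ofReal_ne_top hB
  have hcover : q ≤ (μ S).toReal + (μ B).toReal := by
    rw [← ENNReal.toReal_add hSfin hBfin, ← ENNReal.ofReal_le_iff_le_toReal
      (ENNReal.add_ne_top.2 ⟨hSfin, hBfin⟩), ← hQ]
    exact (measure_mono hQSB).trans (measure_union_le S B)
  have hBq : (μ B).toReal ≤ η * q := ENNReal.toReal_le_of_le_ofReal (by positivity) hB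
  have hSq : (μ S).toReal ≤ q := ENNReal.toReal_le_of_le_ofReal hq.le hSQ'
  constructor
  · rw [le_div_iff₀ hq]; linarith
  · rwa [div_le_one hq]

lemma abs_cos_le_mul_exp_of_exp_mul_lt {γ₁ γ₂ w₁ w₂ δ θ C : ℝ} (hγ₁ : 0 ≤ γ₁) (hγ₂ : 0 ≤ γ₂)
    (hw₁ : w₁ ∈ Ioc 0 δ) (hw₂ : w₂ ∈ Ioc 0 δ) (h : exp (γ₁ / w₁ + γ₂ / w₂) * |cos θ| < C) :
    |cos θ| ≤ C * exp (-(γ₁ + γ₂) / δ) := by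
  obtain ⟨hw₁₀, hw₁δ⟩ := hw₁
  obtain ⟨hw₂₀, hw₂δ⟩ := hw₂
  have hexp : exp ((γ₁ + γ₂) / δ) ≤ exp (γ₁ / w₁ + γ₂ / w₂) := by
    rw [add_div]; gcongr
  rw [neg_div, exp_neg, ← div_eq_mul_inv, le_div_iff₀ (exp_pos _)]
  calc |cos θ| * exp ((γ₁ + γ₂) / δ) ≤ exp (γ₁ / w₁ + γ₂ / w₂) * |cos θ| := by
        rw [mul_comm]; gcongr
    _ ≤ C := h.le

lemma tendsto_mul_exp_neg_div_nhdsGT_zero (C : ℝ) {γ : ℝ} (hγ : 0 < γ) :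
    Tendsto (fun δ ↦ C * exp (-γ / δ)) (𝓝[>] 0) (𝓝 0) := by
  have h : Tendsto (fun δ : ℝ ↦ -γ / δ) (𝓝[>] 0) atBot := by
    refine (tendsto_neg_atTop_atBot.comp
      (tendsto_inv_nhdsGT_zero.const_mul_atTop hγ)).congr fun δ ↦ ?_
    simp only [Function.comp_apply]; ring
  have := (tendsto_exp_atBot.comp h).const_mul C
  rwa [mul_zero] at this

theorem stmt_3_general (C0 γ1 γ2 a1 a2 c : ℝ) (hC0 : 0 < C0) (hγ1 : 0 < γ1) (hγ2 : 0 < γ2)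
    (ha2 : a2 ≠ 0) :
    Tendsto
      (fun δ : ℝ =>
        (volume {p : ℝ × ℝ | p ∈ Set.Ioc 0 δ ×ˢ Set.Ioc 0 δ ∧
          C0 ≤ Real.exp (γ1 / p.1 + γ2 / p.2) * |Real.cos (a1 / p.1 + a2 / p.2 + c)|}).toReal
          / δ ^ 2)
      (nhdsWithin 0 (Set.Ioi 0)) (nhds 1) := by
  set ε : ℝ → ℝ := fun δ ↦ C0 * exp (-(γ1 + γ2) / δ)
  have hε : Tendsto ε (𝓝[>] 0) (𝓝 0) := tendsto_mul_exp_neg_div_nhdsGT_zero C0 (by positivity)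
  have hbounds : ∀ᶠ δ in 𝓝[>] 0, (volume {p : ℝ × ℝ | p ∈ Ioc 0 δ ×ˢ Ioc 0 δ ∧
      C0 ≤ exp (γ1 / p.1 + γ2 / p.2) * |cos (a1 / p.1 + a2 / p.2 + c)|}).toReal / δ ^ 2 ∈
      Icc (1 - 2 * ε δ) 1 := by
    filter_upwards [self_mem_nhdsWithin, hε.eventually (eventually_le_nhds one_pos),
      eventually_nhdsWithin_of_eventually_nhds
        (eventually_le_nhds (by positivity : (0 : ℝ) < |a2| / (2 * π)))]
      with δ (hδ : 0 < δ) hε₁ hδa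
    rw [le_div_iff₀' (by positivity)] at hδa
    have hε₀ : 0 ≤ ε δ := by positivity
    refine toReal_measure_div_mem_Icc_of_subset_union (by positivity) (by positivity) ?_
      (fun p hp ↦ hp.1) (fun p hp ↦ ?_)
      (volume_abs_cos_div_add_div_add_le (a₁ := a1) (c := c) ha2 hδ hδa hε₀ hε₁)
    · rw [Measure.volume_eq_prod, Measure.prod_prod, Real.volume_Ioc, sub_zero,
        ← ENNReal.ofReal_mul hδ.le, sq]
    · by_cases h : C0 ≤ exp (γ1 / p.1 + γ2 / p.2) * |cos (a1 / p.1 + a2 / p.2 + c)|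
      · exact Or.inl ⟨hp, h⟩
      · exact Or.inr ⟨hp, abs_cos_le_mul_exp_of_exp_mul_lt hγ1.le hγ2.le hp.1 hp.2 (not_le.1 h)⟩
  refine tendsto_of_tendsto_of_tendsto_of_le_of_le' ?_ tendsto_const_nhds
    (hbounds.mono fun _ h ↦ h.1) (hbounds.mono fun _ h ↦ h.2)
  simpa using (hε.const_mul 2).const_sub 1

theorem stmt_3 (C0 γ1 γ2 a1 a2 c : ℝ) (hC0 : 0 < C0) (hγ1 : 0 < γ1) (hγ2 : 0 < γ2)
    (ha1 : a1 ≠ 0) (ha2 : a2 ≠ 0) :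
    Tendsto
      (fun δ : ℝ =>
        (volume {p : ℝ × ℝ | p ∈ Set.Ioc 0 δ ×ˢ Set.Ioc 0 δ ∧
          C0 ≤ Real.exp (γ1 / p.1 + γ2 / p.2) * |Real.cos (a1 / p.1 + a2 / p.2 + c)|}).toReal
          / δ ^ 2)
      (nhdsWithin 0 (Set.Ioi 0)) (nhds 1) :=
  stmt_3_general C0 γ1 γ2 a1 a2 c hC0 hγ1 hγ2 ha2
end

section
/- Let d ≥ 1 be an integer, let C0 > 0, let γ1, …, γ_d be positive real constants, let a1, …, a_d be nonzero real numbers, and let c be a real number. Then the limit, as δ → 0⁺, of μ({ w ∈ (0, δ]^d : exp(Σ_{i=1}^d γ_i/w_i) · |cos(Σ_{i=1}^d a_i/w_i + c)| ≥ C0 }) / δ^d equals 1, where μ denotes the d-dimensional Lebesgue measure. -/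
/-!
On the box `(0, δ]^d` one has `∑ γᵢ / wᵢ ≥ G / δ` with `G = ∑ γᵢ`, so outside the good set
`|cos (∑ aᵢ / wᵢ + c)| < ε := C0 e^{-G/δ}`, which tends to `0` with `δ`. By Fubini it suffices to
bound, for fixed `w₂, …, w_d`, the measure of `{x ∈ (0, δ] | |cos (a₁ / x + t)| < ε}`. By Jordan's
inequality `a₁ / x + t` then lies within `η = πε/2` of a zero of `cos`. Discarding `x ≤ √η δ`, the
values `a₁ / x` range over an interval meeting `O(|a₁| / (√η δ))` such windows, and each window
pulls back to a set of `x` of diameter `≤ 2ηδ² / |a₁|`. So the bad set has measure `O(√η δ^d)`.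
-/

open MeasureTheory Filter Real Set

lemma exists_int_abs_sub_lt_of_abs_cos_lt {θ ε : ℝ} (h : |cos θ| < ε) :
    ∃ k : ℤ, |θ - (π / 2 + k * π)| < π / 2 * ε := by
  set k := round ((θ - π / 2) / π)
  refine ⟨k, ?_⟩
  set x := θ - (π / 2 + k * π)
  have hx : |x| ≤ π / 2 := by
    have hround : |(θ - π / 2) / π - k| ≤ 1 / 2 := abs_sub_round _
    have : x = ((θ - π / 2) / π - k) * π := by field_simp; ring
    rw [this, abs_mul, abs_of_pos pi_pos]
    nlinarith [pi_pos]
  have hcos : |cos θ| = |sin x| := by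
    rw [show θ = x + π / 2 + k * π by ring, cos_add_int_mul_pi, abs_mul, abs_neg_one_zpow, one_mul,
      cos_add_pi_div_two, abs_neg]
  have hjordan := mul_abs_le_abs_sin hx
  calc |x| = π / 2 * (2 / π * |x|) := by field_simp
    _ < π / 2 * ε := by gcongr; linarith

lemma Int.card_Icc_ceil_floor_le {lo hi : ℝ} (h : lo ≤ hi + 1) :
    ((Finset.Icc ⌈lo⌉ ⌊hi⌋).card : ℝ) ≤ hi - lo + 1 := by
  rw [Int.card_Icc]
  rcases le_or_gt (⌊hi⌋ + 1 - ⌈lo⌉) 0 with hz | hz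
  · rw [Int.toNat_of_nonpos hz, Nat.cast_zero]
    linarith
  · rw [← Int.cast_natCast, Int.toNat_of_nonneg hz.le]
    push_cast
    linarith [Int.floor_le hi, Int.le_ceil lo]

lemma volume_setOf_abs_div_sub_lt_le_s4 {A : ℝ} (hA : A ≠ 0) (δ η q : ℝ) :
    volume {x ∈ Ioc 0 δ | |A / x - q| < η} ≤ ENNReal.ofReal (2 * η * δ ^ 2 / |A|) := by
  refine (Real.volume_le_diam _).trans (Metric.ediam_le ?_)
  rintro x ⟨⟨hx0, hxδ⟩, hx⟩ y ⟨⟨hy0, hyδ⟩, hy⟩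
  rw [edist_dist, Real.dist_eq]
  refine ENNReal.ofReal_le_ofReal ?_
  have hxy : x - y = x * y * (A / y - A / x) / A := by field_simp
  have hsub : |A / y - A / x| ≤ 2 * η := by
    have := abs_sub_le (A / y) q (A / x)
    rw [abs_sub_comm q] at this
    linarith
  rw [hxy, abs_div, abs_mul, abs_mul, abs_of_pos hx0, abs_of_pos hy0]
  refine div_le_div_of_nonneg_right ?_ (abs_nonneg A)
  have hδ : 0 ≤ δ := hx0.le.trans hxδ
  calc x * y * |A / y - A / x| ≤ δ * δ * (2 * η) := by gcongr
    _ = 2 * η * δ ^ 2 := by ring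

lemma volume_setOf_exists_int_abs_div_sub_lt_le {A δ η : ℝ} (b : ℝ) (hA : 0 < A) (hδ : 0 < δ)
    (hδA : δ ≤ A) (hη : 0 < η) (hη1 : η ≤ 1) :
    volume {x ∈ Ioc 0 δ | ∃ k : ℤ, |A / x - (b + k * π)| < η} ≤
      ENNReal.ofReal (6 * √η * δ) := by
  set s := √η
  have hs : 0 < s := sqrt_pos.2 hη
  have hs1 : s ≤ 1 := sqrt_le_one.2 hη1
  have hηs : η = s * s := (mul_self_sqrt hη.le).symm
  have hπ : 2 ≤ π := by linarith [pi_gt_three]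
  set δ' := s * δ
  have hδ' : 0 < δ' := mul_pos hs hδ
  set K := Finset.Icc ⌈(A / δ - η - b) / π⌉ ⌊(A / δ' + η - b) / π⌋
  have hcover : {x ∈ Ioc 0 δ | ∃ k : ℤ, |A / x - (b + k * π)| < η} ⊆
      Ioc 0 δ' ∪ ⋃ k ∈ K, {x ∈ Ioc 0 δ | |A / x - (b + k * π)| < η} := by
    rintro x ⟨⟨hx0, hxδ⟩, k, hk⟩
    rcases le_or_gt x δ' with hxδ' | hxδ'
    · exact Or.inl ⟨hx0, hxδ'⟩
    refine Or.inr (mem_biUnion (x := k) ?_ ⟨⟨hx0, hxδ⟩, hk⟩)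
    have h1 : A / δ ≤ A / x := div_le_div_of_nonneg_left hA.le hx0 hxδ
    have h2 : A / x < A / δ' := div_lt_div_of_pos_left hA hδ' hxδ'
    rw [abs_lt] at hk
    rw [Finset.mem_coe, Finset.mem_Icc, Int.ceil_le, Int.le_floor, div_le_iff₀ pi_pos,
      le_div_iff₀ pi_pos]
    constructor <;> linarith
  have hcard : (K.card : ℝ) ≤ A / (π * δ') + 2 := by
    have hAδ : 0 < A / δ := by positivity
    have hAδ' : A / δ ≤ A / δ' := div_le_div_of_nonneg_left hA.le hδ' (by nlinarith)
    refine (Int.card_Icc_ceil_floor_le ?_).trans ?_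
    · have := div_le_div_of_nonneg_right (by linarith : A / δ - η - b ≤ A / δ' + η - b) pi_pos.le
      linarith
    · have hsplit : (A / δ' + η - b) / π - (A / δ - η - b) / π + 1 =
          A / (π * δ') + (2 * η - A / δ) / π + 1 := by field_simp; ring
      have : (2 * η - A / δ) / π ≤ 1 := (div_le_one pi_pos).2 (by linarith)
      linarith
  calc volume {x ∈ Ioc 0 δ | ∃ k : ℤ, |A / x - (b + k * π)| < η}
      ≤ volume (Ioc 0 δ') + ∑ k ∈ K, volume {x ∈ Ioc 0 δ | |A / x - (b + k * π)| < η} :=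
        (measure_mono hcover).trans <| (measure_union_le _ _).trans <| by
          gcongr; exact measure_biUnion_finset_le _ _
    _ ≤ ENNReal.ofReal δ' + K.card * ENNReal.ofReal (2 * η * δ ^ 2 / A) := by
        rw [Real.volume_Ioc, sub_zero]
        gcongr
        refine (Finset.sum_le_card_nsmul _ _ _ fun k _ => ?_).trans_eq (nsmul_eq_mul _ _)
        have := volume_setOf_abs_div_sub_lt_le_s4 hA.ne' δ η (b + k * π)
        rwa [abs_of_pos hA] at this
    _ = ENNReal.ofReal (δ' + K.card * (2 * η * δ ^ 2 / A)) := by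
        have hr : 0 ≤ 2 * η * δ ^ 2 / A := by positivity
        rw [ENNReal.ofReal_add hδ'.le (mul_nonneg (Nat.cast_nonneg _) hr),
          ENNReal.ofReal_mul (Nat.cast_nonneg _), ENNReal.ofReal_natCast]
    _ ≤ ENNReal.ofReal (6 * s * δ) := by
        refine ENNReal.ofReal_le_ofReal ?_
        calc δ' + K.card * (2 * η * δ ^ 2 / A)
            ≤ δ' + (A / (π * δ') + 2) * (2 * η * δ ^ 2 / A) := by gcongr
          _ = s * δ + 2 / π * (s * δ) + 4 * s * (s * δ) * (δ / A) := by
              rw [hηs]; field_simp; ring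
          _ ≤ s * δ + 1 * (s * δ) + 4 * 1 * (s * δ) * 1 := by
              gcongr
              · exact (div_le_one pi_pos).2 hπ
              · exact (div_le_one hA).2 hδA
          _ = 6 * s * δ := by ring

lemma volume_setOf_abs_cos_div_add_lt_le_s4 {A δ ε : ℝ} (t : ℝ) (hA : A ≠ 0) (hδ : 0 < δ)
    (hδA : δ ≤ |A|) (hε : 0 < ε) (hε1 : ε ≤ 2 / π) :
    volume {x ∈ Ioc 0 δ | |cos (A / x + t)| < ε} ≤ ENNReal.ofReal (6 * √(π / 2 * ε) * δ) := by
  wlog hA₀ : 0 < A generalizing A t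
  · have hneg := this (-t) (neg_ne_zero.2 hA) (by rwa [abs_neg]) <|
      neg_pos.2 (lt_of_le_of_ne (not_lt.1 hA₀) hA)
    convert hneg using 6 with x
    rw [neg_div, ← neg_add, cos_neg]
  have hη1 : π / 2 * ε ≤ 1 := by
    calc π / 2 * ε ≤ π / 2 * (2 / π) := by gcongr
      _ = 1 := by field_simp
  refine (measure_mono ?_).trans (volume_setOf_exists_int_abs_div_sub_lt_le (π / 2 - t) hA₀ hδ
    (abs_of_pos hA₀ ▸ hδA) (by positivity) hη1)
  rintro x ⟨hx, hcos⟩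
  refine ⟨hx, ?_⟩
  obtain ⟨k, hk⟩ := exists_int_abs_sub_lt_of_abs_cos_lt hcos
  exact ⟨k, by convert hk using 2; ring⟩

theorem MeasureTheory.Measure.prod_apply_le_mul_of_forall_slice_le {α β : Type*}
    [MeasurableSpace α] [MeasurableSpace β] {μ : Measure α} {ν : Measure β} [SFinite μ]
    [SFinite ν] {s : Set (α × β)} (hs : MeasurableSet s) {B : Set β} {M : ENNReal}
    (hsB : ∀ p ∈ s, p.2 ∈ B) (hslice : ∀ y ∈ B, μ {x | (x, y) ∈ s} ≤ M) :
    μ.prod ν s ≤ M * ν B := by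
  rw [Measure.prod_apply_symm hs]
  refine (lintegral_mono fun y => ?_).trans (lintegral_indicator_const_le B M)
  by_cases hy : y ∈ B
  · rw [indicator_of_mem hy]
    exact hslice y hy
  · have : {x | (x, y) ∈ s} = ∅ := eq_empty_of_forall_notMem fun x hx => hy (hsB _ hx)
    simp [hy, Set.preimage, this]

theorem MeasureTheory.volume_le_mul_of_forall_slice_le {α : Type*} [MeasureSpace α]
    [SigmaFinite (volume : Measure α)] {n : ℕ} {S : Set (Fin (n + 1) → α)} (hS : MeasurableSet S)
    {B : Set (Fin n → α)} {M : ENNReal} (hSB : ∀ w ∈ S, Fin.tail w ∈ B)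
    (hslice : ∀ y ∈ B, volume {x | Fin.cons x y ∈ S} ≤ M) :
    volume S ≤ M * volume B := by
  have hmp := (volume_preserving_piFinSuccAbove (fun _ : Fin (n + 1) => α) 0).symm
  rw [← hmp.measure_preimage hS.nullMeasurableSet]
  have hcons : ∀ (x : α) (y : Fin n → α),
      (MeasurableEquiv.piFinSuccAbove (fun _ => α) 0).symm (x, y) = Fin.cons x y :=
    Fin.insertNth_zero'
  refine Measure.prod_apply_le_mul_of_forall_slice_le (hmp.measurable hS) ?_ ?_
  · rintro ⟨x, y⟩ hxy
    simpa [hcons] using hSB _ hxy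
  · intro y hy
    simpa only [Set.mem_preimage, hcons] using hslice y hy

section Box

variable {ι : Type*} [Fintype ι]

lemma volume_setOf_forall_mem_Ioc (δ : ℝ) :
    volume {w : ι → ℝ | ∀ i, w i ∈ Ioc 0 δ} = ENNReal.ofReal δ ^ Fintype.card ι := by
  rw [show {w : ι → ℝ | ∀ i, w i ∈ Ioc 0 δ} = univ.pi fun _ => Ioc 0 δ by ext; simp,
    Real.volume_pi_Ioc]
  simp

lemma volume_setOf_forall_mem_Ioc_ne_top (δ : ℝ) :
    volume {w : ι → ℝ | ∀ i, w i ∈ Ioc 0 δ} ≠ ⊤ := by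
  rw [volume_setOf_forall_mem_Ioc]
  exact ENNReal.pow_ne_top ENNReal.ofReal_ne_top

lemma volume_real_setOf_forall_mem_Ioc {δ : ℝ} (hδ : 0 ≤ δ) :
    volume.real {w : ι → ℝ | ∀ i, w i ∈ Ioc 0 δ} = δ ^ Fintype.card ι := by
  rw [measureReal_def, volume_setOf_forall_mem_Ioc, ← ENNReal.ofReal_pow hδ,
    ENNReal.toReal_ofReal (by positivity)]

lemma volume_real_setOf_forall_mem_Ioc_and_le (P : (ι → ℝ) → Prop) {δ : ℝ} (hδ : 0 ≤ δ) :
    volume.real {w : ι → ℝ | (∀ i, w i ∈ Ioc 0 δ) ∧ P w} ≤ δ ^ Fintype.card ι :=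
  volume_real_setOf_forall_mem_Ioc (ι := ι) hδ ▸
    measureReal_mono (fun _ hw => hw.1) (volume_setOf_forall_mem_Ioc_ne_top δ)

lemma sub_volume_real_le_of_forall_or {P Q : (ι → ℝ) → Prop} {δ : ℝ} (hδ : 0 ≤ δ)
    (h : ∀ w : ι → ℝ, (∀ i, w i ∈ Ioc 0 δ) → P w ∨ Q w) :
    δ ^ Fintype.card ι - volume.real {w : ι → ℝ | (∀ i, w i ∈ Ioc 0 δ) ∧ Q w} ≤
      volume.real {w : ι → ℝ | (∀ i, w i ∈ Ioc 0 δ) ∧ P w} := by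
  rw [sub_le_iff_le_add, ← volume_real_setOf_forall_mem_Ioc hδ]
  refine (measureReal_mono ?_ ?_).trans (measureReal_union_le _ _)
  · exact fun w hw => (h w hw).imp (⟨hw, ·⟩) (⟨hw, ·⟩)
  · exact ne_top_of_le_ne_top (volume_setOf_forall_mem_Ioc_ne_top δ)
      (measure_mono (union_subset (fun w hw => hw.1) fun w hw => hw.1))

end Box

lemma volume_setOf_forall_mem_Ioc_and_abs_cos_lt_le {n : ℕ} {a : Fin (n + 1) → ℝ} {δ ε : ℝ}
    (c : ℝ) (ha : a 0 ≠ 0) (hδ : 0 < δ) (hδa : δ ≤ |a 0|) (hε : 0 < ε) (hε1 : ε ≤ 2 / π) :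
    volume {w : Fin (n + 1) → ℝ | (∀ i, w i ∈ Ioc 0 δ) ∧ |cos (∑ i, a i / w i + c)| < ε} ≤
      ENNReal.ofReal (6 * √(π / 2 * ε) * δ ^ (n + 1)) := by
  have hmeas : MeasurableSet
      {w : Fin (n + 1) → ℝ | (∀ i, w i ∈ Ioc 0 δ) ∧ |cos (∑ i, a i / w i + c)| < ε} := by
    measurability
  refine (volume_le_mul_of_forall_slice_le hmeas (B := {y | ∀ j, y j ∈ Ioc 0 δ})
    (M := ENNReal.ofReal (6 * √(π / 2 * ε) * δ)) ?_ ?_).trans ?_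
  · exact fun w hw j => hw.1 j.succ
  · intro y _
    refine (measure_mono ?_).trans (volume_setOf_abs_cos_div_add_lt_le_s4
      (∑ j, a j.succ / y j + c) ha hδ hδa hε hε1)
    rintro x ⟨hw, hcos⟩
    refine ⟨by simpa using hw 0, ?_⟩
    simpa [Fin.sum_univ_succ, add_assoc] using hcos
  · rw [volume_setOf_forall_mem_Ioc, Fintype.card_fin, ← ENNReal.ofReal_pow hδ.le,
      ← ENNReal.ofReal_mul (by positivity), pow_succ', mul_assoc]

lemma lt_mul_exp_neg_sum_div_of_exp_sum_div_mul_lt {ι : Type*} [Fintype ι] {γ w : ι → ℝ}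
    {δ C y : ℝ} (hγ : ∀ i, 0 ≤ γ i) (hw : ∀ i, w i ∈ Ioc 0 δ) (hy : 0 ≤ y)
    (h : exp (∑ i, γ i / w i) * y < C) : y < C * exp (-((∑ i, γ i) / δ)) := by
  have hsum : (∑ i, γ i) / δ ≤ ∑ i, γ i / w i := by
    rw [Finset.sum_div]
    exact Finset.sum_le_sum fun i _ => div_le_div_of_nonneg_left (hγ i) (hw i).1 (hw i).2
  have hC : 0 ≤ C := (mul_nonneg (exp_pos _).le hy).trans h.le
  calc y = exp (-∑ i, γ i / w i) * (exp (∑ i, γ i / w i) * y) := by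
        rw [← mul_assoc, ← exp_add, neg_add_cancel, exp_zero, one_mul]
    _ < exp (-∑ i, γ i / w i) * C := mul_lt_mul_of_pos_left h (exp_pos _)
    _ ≤ exp (-((∑ i, γ i) / δ)) * C := by gcongr
    _ = C * exp (-((∑ i, γ i) / δ)) := mul_comm _ _

theorem stmt_4 (d : ℕ) (hd : 1 ≤ d) (C0 c : ℝ) (hC0 : 0 < C0)
    (γ a : Fin d → ℝ) (hγ : ∀ i, 0 < γ i) (ha : ∀ i, a i ≠ 0) :
    Tendsto
      (fun δ : ℝ =>
        (volume {w : Fin d → ℝ | (∀ i, w i ∈ Set.Ioc 0 δ) ∧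
          C0 ≤ Real.exp (∑ i, γ i / w i) * |Real.cos ((∑ i, a i / w i) + c)|}).toReal
          / δ ^ d)
      (nhdsWithin 0 (Set.Ioi 0)) (nhds 1) := by
  obtain ⟨n, rfl⟩ : ∃ n, d = n + 1 := ⟨d - 1, by omega⟩
  set ε : ℝ → ℝ := fun δ => C0 * exp (-((∑ i, γ i) / δ))
  have hε : Tendsto ε (nhdsWithin 0 (Ioi 0)) (nhds 0) := by
    have hG : 0 < ∑ i, γ i := Finset.sum_pos (fun i _ => hγ i) Finset.univ_nonempty
    simpa [ε, div_eq_mul_inv] using (tendsto_exp_neg_atTop_nhds_zero.comp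
      (tendsto_inv_nhdsGT_zero.const_mul_atTop hG)).const_mul C0
  refine tendsto_of_tendsto_of_tendsto_of_le_of_le' (g := fun δ => 1 - 6 * √(π / 2 * ε δ))
    ?_ tendsto_const_nhds ?_ ?_
  · simpa using ((hε.const_mul (π / 2)).sqrt.const_mul 6).const_sub 1
  · filter_upwards [Ioc_mem_nhdsGT (abs_pos.2 (ha 0)),
      hε.eventually (gt_mem_nhds (by positivity : (0 : ℝ) < 2 / π))] with δ ⟨hδ, hδa⟩ hε1
    have hcover := sub_volume_real_le_of_forall_or
      (Q := fun w => |cos (∑ i, a i / w i + c)| < ε δ) hδ.le fun w hw =>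
      (le_or_gt C0 (exp (∑ i, γ i / w i) * |cos (∑ i, a i / w i + c)|)).imp_right
        (lt_mul_exp_neg_sum_div_of_exp_sum_div_mul_lt (fun i => (hγ i).le) hw (abs_nonneg _))
    have hbad := ENNReal.toReal_le_of_le_ofReal (by positivity)
      (volume_setOf_forall_mem_Ioc_and_abs_cos_lt_le c (ha 0) hδ hδa (by positivity) hε1.le)
    rw [Fintype.card_fin] at hcover
    rw [← measureReal_def] at hbad ⊢
    rw [le_div_iff₀ (by positivity)]
    linarith
  · filter_upwards [self_mem_nhdsWithin] with δ hδ
    refine div_le_one_of_le₀ ?_ (pow_pos hδ _).le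
    exact (volume_real_setOf_forall_mem_Ioc_and_le _ (le_of_lt hδ)).trans_eq
      (by rw [Fintype.card_fin])
end
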